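/- Let E be an infinite-dimensional separable real Hilbert space and let R : E → E be a surjective linear isometry. Then the map Φ : W_2(E) → W_2(E), μ ↦ (t_{m(μ)} ∘ R ∘ t_{−m(μ)})_# μ, is an isometry of the quadratic Wasserstein space W_2(E): it is a bijection and satisfies d_{W_2}(Φ(μ),Φ(ν)) = d_{W_2}(μ,ν) for all μ,ν ∈ W_2(E). -/

import Mathlib

/-! The map `x ↦ R (x - c) + c` is an isometry fixing `c`, so `Φ` preserves `W₂` and barycenters,
and rotating by `R⁻¹` around the barycenter inverts it. Transporting a coupling `π` of `μ` and `ν`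
by the two rotations turns the displacement `w = x - y` into `R (w - d) + d`, where
`d = m(μ) - m(ν)` is the mean of `w` under `π`. As `E ‖u + d‖² = E ‖u‖² + ‖d‖²` for centred `u`,
the new cost is `E ‖w - d‖² + ‖d‖² = E ‖w‖²`, the cost of `π`; and these transports are a bijection
between the couplings of `μ, ν` and those of `Φ μ, Φ ν`. -/

open MeasureTheory ENNReal Topology Filter
open scoped RealInnerProductSpace

noncomputable section

/-- The `p`-Wasserstein "distance" (valued in `ℝ≥0∞`) between two Borel measures on a
metric space: `(inf over couplings π of ∫ ρ(x,y)^p dπ)^(min (1/p) 1)`. -/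
noncomputable def wassersteinDist {X : Type*} [MeasurableSpace X] [PseudoEMetricSpace X]
    (p : ℝ) (μ ν : Measure X) : ℝ≥0∞ :=
  (⨅ π ∈ {π : Measure (X × X) | π.map Prod.fst = μ ∧ π.map Prod.snd = ν},
    ∫⁻ z, edist z.1 z.2 ^ p ∂π) ^ min p⁻¹ 1

/-- Membership in the `p`-Wasserstein space: a Borel probability measure with a finite
`p`-th moment. -/
def MemWp {X : Type*} [MeasurableSpace X] [PseudoEMetricSpace X] (p : ℝ) (μ : Measure X) : Prop :=
  IsProbabilityMeasure μ ∧ ∃ x₀ : X, ∫⁻ x, edist x x₀ ^ p ∂μ ≠ ⊤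

section Couplings

variable {X X' Y Y' : Type*} [MeasurableSpace X] [MeasurableSpace X'] [MeasurableSpace Y]
  [MeasurableSpace Y']

def couplings (μ : Measure X) (ν : Measure Y) : Set (Measure (X × Y)) :=
  {π | π.map Prod.fst = μ ∧ π.map Prod.snd = ν}

lemma map_fst_map_prodCongr (e₁ : X ≃ᵐ X') (e₂ : Y ≃ᵐ Y') (π : Measure (X × Y)) :
    (π.map (e₁.prodCongr e₂)).map Prod.fst = (π.map Prod.fst).map e₁ := by
  rw [Measure.map_map measurable_fst (e₁.prodCongr e₂).measurable,
    Measure.map_map e₁.measurable measurable_fst]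
  rfl

lemma map_snd_map_prodCongr (e₁ : X ≃ᵐ X') (e₂ : Y ≃ᵐ Y') (π : Measure (X × Y)) :
    (π.map (e₁.prodCongr e₂)).map Prod.snd = (π.map Prod.snd).map e₂ := by
  rw [Measure.map_map measurable_snd (e₁.prodCongr e₂).measurable,
    Measure.map_map e₂.measurable measurable_snd]
  rfl

lemma couplings_map_map (e₁ : X ≃ᵐ X') (e₂ : Y ≃ᵐ Y') (μ : Measure X) (ν : Measure Y) :
    couplings (μ.map e₁) (ν.map e₂) = (fun π => π.map (e₁.prodCongr e₂)) '' couplings μ ν := by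
  ext π'
  constructor
  · rintro ⟨h₁, h₂⟩
    refine ⟨π'.map (e₁.prodCongr e₂).symm, ⟨?_, ?_⟩, MeasurableEquiv.map_map_symm _⟩
    · rw [show (e₁.prodCongr e₂).symm = e₁.symm.prodCongr e₂.symm from rfl,
        map_fst_map_prodCongr, h₁, MeasurableEquiv.map_symm_map]
    · rw [show (e₁.prodCongr e₂).symm = e₁.symm.prodCongr e₂.symm from rfl,
        map_snd_map_prodCongr, h₂, MeasurableEquiv.map_symm_map]
  · rintro ⟨π, ⟨h₁, h₂⟩, rfl⟩
    exact ⟨by rw [map_fst_map_prodCongr, h₁], by rw [map_snd_map_prodCongr, h₂]⟩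

end Couplings

section Wasserstein

variable {X : Type*} [MeasurableSpace X] [PseudoEMetricSpace X]

lemma wassersteinDist_map_map_of_cost_eq (e₁ e₂ : X ≃ᵐ X) {p : ℝ} {μ ν : Measure X}
    (h : ∀ π ∈ couplings μ ν,
      ∫⁻ z, edist (e₁ z.1) (e₂ z.2) ^ p ∂π = ∫⁻ z, edist z.1 z.2 ^ p ∂π) :
    wassersteinDist p (μ.map e₁) (ν.map e₂) = wassersteinDist p μ ν := by
  change (⨅ π ∈ couplings (μ.map e₁) (ν.map e₂), _) ^ _ = (⨅ π ∈ couplings μ ν, _) ^ _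
  rw [couplings_map_map, iInf_image]
  congr 1
  refine biInf_congr fun π hπ => ?_
  rw [lintegral_map_equiv]
  exact h π hπ

lemma MemWp.map_isometryEquiv {Y : Type*} [PseudoEMetricSpace Y] [MeasurableSpace Y]
    [BorelSpace X] [BorelSpace Y] {p : ℝ} {μ : Measure X} (hμ : MemWp p μ) (e : X ≃ᵢ Y) :
    MemWp p (μ.map e) := by
  obtain ⟨hprob, x₀, hx₀⟩ := hμ
  refine ⟨Measure.isProbabilityMeasure_map e.continuous.measurable.aemeasurable, e x₀, ?_⟩
  rw [show (μ.map e) = μ.map e.toHomeomorph.toMeasurableEquiv from rfl, lintegral_map_equiv]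
  convert hx₀ using 3 with x
  exact congrArg (· ^ p) (e.edist_eq x x₀)

end Wasserstein

section Moments

variable {E : Type*} [NormedAddCommGroup E] [MeasurableSpace E] [BorelSpace E]
  [SecondCountableTopology E]

lemma MemWp.memLp_id {p : ℝ} (hp : 0 < p) {μ : Measure E} (hμ : MemWp p μ) :
    MemLp id (ENNReal.ofReal p) μ := by
  obtain ⟨hprob, x₀, hx₀⟩ := hμ
  have hsub : MemLp (fun x => x - x₀) (ENNReal.ofReal p) μ := by
    refine ⟨by fun_prop, ?_⟩
    rw [eLpNorm_lt_top_iff_lintegral_rpow_enorm_lt_top (by simpa using hp) ofReal_ne_top,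
      ENNReal.toReal_ofReal hp.le]
    simpa [edist_eq_enorm_sub] using hx₀.lt_top
  convert hsub.add (memLp_const x₀)
  ext x
  simp

lemma MemWp.integrable_id {μ : Measure E} (hμ : MemWp 2 μ) : Integrable id μ := by
  have := hμ.1
  exact (by simpa using hμ.memLp_id two_pos : MemLp id 2 μ).integrable one_le_two

end Moments

section SecondMoments

variable {Ω E : Type*} [MeasurableSpace Ω] [NormedAddCommGroup E]

lemma MeasureTheory.MemLp.ofReal_integral_norm_sq {P : Measure Ω} {f : Ω → E} (hf : MemLp f 2 P) :
    ENNReal.ofReal (∫ ω, ‖f ω‖ ^ 2 ∂P) = ∫⁻ ω, ‖f ω‖ₑ ^ 2 ∂P := by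
  rw [ofReal_integral_eq_lintegral_ofReal (hf.integrable_norm_pow two_ne_zero)
    (ae_of_all _ fun ω => by positivity)]
  simp_rw [ENNReal.ofReal_pow (norm_nonneg _), ofReal_norm]

variable [InnerProductSpace ℝ E] [CompleteSpace E] {P : Measure Ω} [IsProbabilityMeasure P]

lemma integral_norm_add_sq_of_integral_eq_zero {u : Ω → E} (hu : MemLp u 2 P)
    (hu₀ : ∫ ω, u ω ∂P = 0) (c : E) :
    ∫ ω, ‖u ω + c‖ ^ 2 ∂P = ∫ ω, ‖u ω‖ ^ 2 ∂P + ‖c‖ ^ 2 := by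
  have hinner : Integrable (fun ω => 2 * ⟪u ω, c⟫) P :=
    ((hu.integrable one_le_two).inner_const c).const_mul 2
  have hinner₀ : ∫ ω, ⟪u ω, c⟫ ∂P = 0 := by
    rw [show (fun ω => ⟪u ω, c⟫) = fun ω => ⟪c, u ω⟫ from funext fun ω => real_inner_comm _ _,
      integral_inner (hu.integrable one_le_two), hu₀, inner_zero_right]
  simp_rw [norm_add_sq_real]
  rw [integral_add (f := fun ω => ‖u ω‖ ^ 2 + 2 * ⟪u ω, c⟫)
      ((hu.integrable_norm_pow two_ne_zero).add hinner) (integrable_const _),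
    integral_add (hu.integrable_norm_pow two_ne_zero) hinner, integral_const_mul, hinner₀,
    integral_const, probReal_univ, one_smul, mul_zero, add_zero]

lemma integral_norm_linearIsometry_sub_integral_add_sq (S : E →ₗᵢ[ℝ] E) {w : Ω → E}
    (hw : MemLp w 2 P) :
    ∫ ω, ‖S (w ω - ∫ ω, w ω ∂P) + ∫ ω, w ω ∂P‖ ^ 2 ∂P = ∫ ω, ‖w ω‖ ^ 2 ∂P := by
  set d := ∫ ω, w ω ∂P
  have hc : MemLp (fun ω => w ω - d) 2 P := hw.sub (memLp_const d)
  have hc₀ : ∫ ω, (w ω - d) ∂P = 0 := by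
    rw [integral_sub (hw.integrable one_le_two) (integrable_const d), integral_const,
      probReal_univ, one_smul, sub_self]
  have hSc : MemLp (fun ω => S (w ω - d)) 2 P := S.toContinuousLinearMap.comp_memLp' hc
  have hSc₀ : ∫ ω, S (w ω - d) ∂P = 0 := by rw [S.integral_comp_comm, hc₀, map_zero]
  calc ∫ ω, ‖S (w ω - d) + d‖ ^ 2 ∂P
      = ∫ ω, ‖S (w ω - d)‖ ^ 2 ∂P + ‖d‖ ^ 2 := integral_norm_add_sq_of_integral_eq_zero hSc hSc₀ d
    _ = ∫ ω, ‖(w ω - d) + d‖ ^ 2 ∂P := by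
      simp only [LinearIsometry.norm_map, integral_norm_add_sq_of_integral_eq_zero hc hc₀ d]
    _ = ∫ ω, ‖w ω‖ ^ 2 ∂P := by simp only [sub_add_cancel]

end SecondMoments

section Rotation

variable {E : Type*} [NormedAddCommGroup E] [InnerProductSpace ℝ E]

def rotateAround (R : E ≃ₗᵢ[ℝ] E) (c : E) : E ≃ᵢ E :=
  ((IsometryEquiv.subRight c).trans R.toIsometryEquiv).trans (IsometryEquiv.addRight c)

@[simp]
lemma rotateAround_apply (R : E ≃ₗᵢ[ℝ] E) (c x : E) : rotateAround R c x = R (x - c) + c := rfl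

lemma rotateAround_symm_comp (R : E ≃ₗᵢ[ℝ] E) (c : E) :
    rotateAround R.symm c ∘ rotateAround R c = id := by
  ext x
  simp

lemma rotateAround_sub_rotateAround (R : E ≃ₗᵢ[ℝ] E) (a b x y : E) :
    rotateAround R a x - rotateAround R b y = R ((x - y) - (a - b)) + (a - b) := by
  simp only [rotateAround_apply, map_sub]
  abel

end Rotation

section RandomVectors

variable {Ω E : Type*} [MeasurableSpace Ω] [NormedAddCommGroup E] [InnerProductSpace ℝ E]
  [CompleteSpace E] {P : Measure Ω} [IsProbabilityMeasure P]

lemma lintegral_edist_rotateAround_integral_sq (R : E ≃ₗᵢ[ℝ] E) {f g : Ω → E}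
    (hf : MemLp f 2 P) (hg : MemLp g 2 P) :
    ∫⁻ ω, edist (rotateAround R (∫ ω, f ω ∂P) (f ω)) (rotateAround R (∫ ω, g ω ∂P) (g ω))
      ^ (2 : ℝ) ∂P = ∫⁻ ω, edist (f ω) (g ω) ^ (2 : ℝ) ∂P := by
  have hw : MemLp (fun ω => f ω - g ω) 2 P := hf.sub hg
  have hmean : ∫ ω, f ω ∂P - ∫ ω, g ω ∂P = ∫ ω, (f ω - g ω) ∂P :=
    (integral_sub (hf.integrable one_le_two) (hg.integrable one_le_two)).symm
  have hRw : MemLp (fun ω => R ((f ω - g ω) - ∫ ω, (f ω - g ω) ∂P) + ∫ ω, (f ω - g ω) ∂P) 2 P :=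
    (R.toContinuousLinearEquiv.toContinuousLinearMap.comp_memLp'
      (hw.sub (memLp_const _))).add (memLp_const _)
  simp_rw [edist_eq_enorm_sub, rotateAround_sub_rotateAround, hmean, ENNReal.rpow_two]
  refine hRw.ofReal_integral_norm_sq.symm.trans (Eq.trans ?_ hw.ofReal_integral_norm_sq)
  exact congrArg ENNReal.ofReal
    (integral_norm_linearIsometry_sub_integral_add_sq R.toLinearIsometry hw)

end RandomVectors

section RotationAroundBarycenter

variable {E : Type*} [NormedAddCommGroup E] [InnerProductSpace ℝ E] [MeasurableSpace E]
  [BorelSpace E]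

def rotateAroundBarycenter (R : E ≃ₗᵢ[ℝ] E) (μ : Measure E) : Measure E :=
  μ.map (rotateAround R (∫ x, x ∂μ))

lemma MemWp.rotateAroundBarycenter {p : ℝ} {μ : Measure E} (hμ : MemWp p μ)
    (R : E ≃ₗᵢ[ℝ] E) : MemWp p (rotateAroundBarycenter R μ) :=
  hμ.map_isometryEquiv _

variable [CompleteSpace E]

lemma integral_id_map_rotateAround (R : E ≃ₗᵢ[ℝ] E) (c : E) {μ : Measure E}
    [IsProbabilityMeasure μ] (hμ : Integrable id μ) :
    ∫ x, x ∂(μ.map (rotateAround R c)) = R (∫ x, x ∂μ - c) + c := by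
  have hsub : Integrable (fun x => x - c) μ := hμ.sub (integrable_const c)
  rw [show μ.map (rotateAround R c) = μ.map (rotateAround R c).toHomeomorph.toMeasurableEquiv
    from rfl, integral_map_equiv]
  change ∫ x, ((R : E →L[ℝ] E) (x - c) + c) ∂μ = _
  rw [integral_add ((R : E →L[ℝ] E).integrable_comp hsub) (integrable_const c),
    (R : E →L[ℝ] E).integral_comp_comm hsub, integral_sub (f := fun x => x) hμ (integrable_const c),
    integral_const, probReal_univ, one_smul]
  rfl

variable [SecondCountableTopology E]

lemma integral_id_rotateAroundBarycenter (R : E ≃ₗᵢ[ℝ] E) {μ : Measure E} (hμ : MemWp 2 μ) :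
    ∫ x, x ∂(rotateAroundBarycenter R μ) = ∫ x, x ∂μ := by
  have := hμ.1
  rw [rotateAroundBarycenter, integral_id_map_rotateAround R _ hμ.integrable_id, sub_self,
    map_zero, zero_add]

lemma rotateAroundBarycenter_symm_rotateAroundBarycenter (R : E ≃ₗᵢ[ℝ] E) {μ : Measure E}
    (hμ : MemWp 2 μ) : rotateAroundBarycenter R.symm (rotateAroundBarycenter R μ) = μ := by
  rw [rotateAroundBarycenter, integral_id_rotateAroundBarycenter R hμ, rotateAroundBarycenter,
    Measure.map_map (rotateAround _ _).continuous.measurable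
      (rotateAround _ _).continuous.measurable,
    rotateAround_symm_comp, Measure.map_id]

lemma wassersteinDist_rotateAroundBarycenter (R : E ≃ₗᵢ[ℝ] E) {μ ν : Measure E}
    (hμ : MemWp 2 μ) (hν : MemWp 2 ν) :
    wassersteinDist 2 (rotateAroundBarycenter R μ) (rotateAroundBarycenter R ν)
      = wassersteinDist 2 μ ν := by
  refine wassersteinDist_map_map_of_cost_eq (rotateAround R _).toHomeomorph.toMeasurableEquiv
    (rotateAround R _).toHomeomorph.toMeasurableEquiv fun π ⟨h₁, h₂⟩ => ?_
  have hfst : MeasurePreserving Prod.fst π μ := ⟨measurable_fst, h₁⟩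
  have hsnd : MeasurePreserving Prod.snd π ν := ⟨measurable_snd, h₂⟩
  have : IsProbabilityMeasure π := by
    have := hμ.1
    rwa [← h₁, Measure.isProbabilityMeasure_map_iff measurable_fst.aemeasurable] at this
  have hmean₁ : ∫ z, z.1 ∂π = ∫ x, x ∂μ := by
    rw [← h₁, integral_map (f := fun x => x) measurable_fst.aemeasurable aestronglyMeasurable_id]
  have hmean₂ : ∫ z, z.2 ∂π = ∫ x, x ∂ν := by
    rw [← h₂, integral_map (f := fun x => x) measurable_snd.aemeasurable aestronglyMeasurable_id]
  have hL₁ : MemLp Prod.fst 2 π :=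
    (by simpa using hμ.memLp_id two_pos : MemLp id 2 μ).comp_measurePreserving hfst
  have hL₂ : MemLp Prod.snd 2 π :=
    (by simpa using hν.memLp_id two_pos : MemLp id 2 ν).comp_measurePreserving hsnd
  have key := lintegral_edist_rotateAround_integral_sq R hL₁ hL₂
  rw [hmean₁, hmean₂] at key
  exact key

end RotationAroundBarycenter

theorem rotation_around_barycenter_isometry_general
    {E : Type*} [NormedAddCommGroup E] [InnerProductSpace ℝ E] [CompleteSpace E]
    [SecondCountableTopology E] [MeasurableSpace E] [BorelSpace E]
    (R : E ≃ₗᵢ[ℝ] E)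
    (Φ : Measure E → Measure E)
    (hΦ : ∀ μ : Measure E, Φ μ = μ.map (fun x => R (x - ∫ y, y ∂μ) + ∫ y, y ∂μ)) :
    (∀ μ : Measure E, MemWp 2 μ → MemWp 2 (Φ μ)) ∧
    Set.BijOn Φ {μ : Measure E | MemWp 2 μ} {μ : Measure E | MemWp 2 μ} ∧
    (∀ μ ν : Measure E, MemWp 2 μ → MemWp 2 ν →
      wassersteinDist 2 (Φ μ) (Φ ν) = wassersteinDist 2 μ ν) := by
  obtain rfl : Φ = rotateAroundBarycenter R := funext hΦ
  have hmaps (S : E ≃ₗᵢ[ℝ] E) : Set.MapsTo (rotateAroundBarycenter S)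
      {μ | MemWp 2 μ} {μ | MemWp 2 μ} := fun μ hμ => MemWp.rotateAroundBarycenter hμ S
  have hinv : Set.InvOn (rotateAroundBarycenter R.symm) (rotateAroundBarycenter R)
      {μ | MemWp 2 μ} {μ | MemWp 2 μ} :=
    ⟨fun μ hμ => rotateAroundBarycenter_symm_rotateAroundBarycenter R hμ,
      fun μ hμ => by
        simpa using rotateAroundBarycenter_symm_rotateAroundBarycenter R.symm hμ⟩
  exact ⟨hmaps R, hinv.bijOn (hmaps R) (hmaps R.symm),
    fun μ ν hμ hν => wassersteinDist_rotateAroundBarycenter R hμ hν⟩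

/-- for a surjective linear isometry `R` of an infinite-dimensional separable
real Hilbert space `E`, the map `μ ↦ (t_{m(μ)} ∘ R ∘ t_{-m(μ)})_# μ` ("rotation around the
barycenter") is an isometry of `W₂(E)`. -/
theorem rotation_around_barycenter_isometry
    {E : Type*} [NormedAddCommGroup E] [InnerProductSpace ℝ E] [CompleteSpace E]
    [SecondCountableTopology E] [MeasurableSpace E] [BorelSpace E]
    (hinf : ¬ FiniteDimensional ℝ E)
    (R : E ≃ₗᵢ[ℝ] E)
    (Φ : Measure E → Measure E)
    (hΦ : ∀ μ : Measure E, Φ μ = μ.map (fun x => R (x - ∫ y, y ∂μ) + ∫ y, y ∂μ)) :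
    (∀ μ : Measure E, MemWp 2 μ → MemWp 2 (Φ μ)) ∧
    Set.BijOn Φ {μ : Measure E | MemWp 2 μ} {μ : Measure E | MemWp 2 μ} ∧
    (∀ μ ν : Measure E, MemWp 2 μ → MemWp 2 ν →
      wassersteinDist 2 (Φ μ) (Φ ν) = wassersteinDist 2 μ ν) :=
  rotation_around_barycenter_isometry_general R Φ hΦ
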